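/- arXiv:2604.15582 — 4 statements merged into one kernel-verified Lean document; each statement's English description precedes it below -/
import Mathlib

section
/- Let (W,S) be a Coxeter system, let 𝔬 be a set of monodromy parameters, and let L ∈ 𝔬. If x̲ and y̲ are two words with letters in S whose products in W are equal, then b_L(x̲) = b_L(y̲). In particular b_L descends to a well-defined map b_L : W → W. -/
/-!
Statement 1: `b_L(x̲) = b_L(y̲)` whenever the words `x̲`, `y̲` have the same product in `W`;
in particular `b_L` descends to a well-defined map `W → W`.
-/

attribute [local instance] Classical.propDecidable

noncomputable section

namespace PaperStmt

variable {B W O : Type*} [Group W] {M : CoxeterMatrix B}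

/-- The map `b_L` on words: a letter of the word is deleted exactly when it does not change
the monodromy parameter. -/
def bword (cs : CoxeterSystem M W) (act : O → W → O) : O → List B → W
  | _, [] => 1
  | L, i :: ω =>
      (if act L (cs.simple i) = L then 1 else cs.simple i) *
        bword cs act (act L (cs.simple i)) ω

section Core

variable (act : O → W → O) (L : O) (s t : W)

/-- one letter of the (possibly deleted) alternating word -/
def el : ℤ → W := fun k =>
  if act L ((s * t) ^ k * s) = L then 1 else if k % 2 = 0 then s else t

/-- product of letters `el a, el (a+1), ..., el (a+n-1)` -/
def prodEl : ℤ → ℕ → W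
  | _, 0 => 1
  | a, n + 1 => el act L s t a * prodEl (a + 1) n

/-- plain alternating word (letter determined by parity of the index) -/
def altP : ℤ → ℕ → W
  | _, 0 => 1
  | a, n + 1 => (if a % 2 = 0 then s else t) * altP (a + 1) n

variable (h1 : ∀ L : O, act L 1 = L)
    (h2 : ∀ (L : O) (u v : W), act L (u * v) = act (act L u) v)
    (hs : s * s = 1) (ht : t * t = 1)

section ActLemmas
include h1 h2

theorem act_shift (u x : W) :
    act (act L u) x = act L u ↔ act L (u * x * u⁻¹) = L := by
  constructor
  · intro h
    have : act L (u * x * u⁻¹) = act (act (act L u) x) u⁻¹ := by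
      rw [h2, h2]
    rw [this, h, ← h2, mul_inv_cancel, h1]
  · intro h
    have := congrArg (fun z => act z u) h
    rw [← h2, mul_assoc, mul_assoc, inv_mul_cancel, mul_one, h2] at this
    exact this

theorem act_stab_mul {x y : W} (hx : act L x = L) (hy : act L y = L) :
    act L (x * y) = L := by rw [h2, hx, hy]

end ActLemmas

section InvLemmas
include hs

theorem s_inv : s⁻¹ = s := inv_eq_of_mul_eq_one_right hs

include ht

theorem st_inv : (s * t)⁻¹ = t * s := by
  rw [mul_inv_rev, s_inv s hs, s_inv t ht]

theorem s_conj_zpow (k : ℤ) : s * (s * t) ^ k * s = (s * t) ^ (-k) := by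
  have h := map_zpow (MulAut.conj s) (s * t) k
  simp only [MulAut.conj_apply] at h
  rw [s_inv s hs] at h
  have hc : s * (s * t) * s = (s * t)⁻¹ := by
    rw [st_inv s t hs ht, ← mul_assoc, hs, one_mul]
  rw [h, hc, inv_zpow, zpow_neg]

theorem s_zpow_comm (k : ℤ) : s * (s * t) ^ k = (s * t) ^ (-k) * s := by
  have := s_conj_zpow s t hs ht k
  calc s * (s * t) ^ k = (s * (s * t) ^ k * s) * s := by
        rw [mul_assoc, hs, mul_one]
    _ = (s * t) ^ (-k) * s := by rw [this]

theorem refl_mul_refl (a b : ℤ) :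
    ((s * t) ^ a * s) * ((s * t) ^ b * s) = (s * t) ^ (a - b) := by
  rw [mul_assoc, ← mul_assoc s, s_zpow_comm s t hs ht b, mul_assoc, hs, mul_one,
    ← zpow_add, ← sub_eq_add_neg]

end InvLemmas

end Core

section Invol
variable {W' : Type*} [Group W']

theorem conj_pow_invol (x y : W') (hx : x * x = 1) (k : ℕ) :
    x * (x * y) ^ k * x = (y * x) ^ k := by
  have hxi : x⁻¹ = x := inv_eq_of_mul_eq_one_right hx
  have h := map_pow (MulAut.conj x) (x * y) k
  simp only [MulAut.conj_apply] at h
  rw [hxi] at h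
  rw [h]
  congr 1
  rw [← mul_assoc, hx, one_mul]

theorem pow_mul_pow_rev (x y : W') (hx : x * x = 1) (hy : y * y = 1) (k : ℕ) :
    (x * y) ^ k * (y * x) ^ k = 1 := by
  have : y * x = (x * y)⁻¹ := by
    rw [mul_inv_rev, inv_eq_of_mul_eq_one_right hx, inv_eq_of_mul_eq_one_right hy]
  rw [this, inv_pow, mul_inv_cancel]

theorem pow_mul_invol_sq (x y : W') (hx : x * x = 1) (hy : y * y = 1) (k : ℕ) :
    ((x * y) ^ k * x) * ((x * y) ^ k * x) = 1 := by
  have h : x * (x * y) ^ k * x = (y * x) ^ k := conj_pow_invol x y hx k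
  calc ((x * y) ^ k * x) * ((x * y) ^ k * x)
      = (x * y) ^ k * (x * (x * y) ^ k * x) := by group
    _ = (x * y) ^ k * (y * x) ^ k := by rw [h]
    _ = 1 := pow_mul_pow_rev x y hx hy k

end Invol

section Core2

variable (act : O → W → O) (L : O) (s t : W)

theorem prodEl_succ (a : ℤ) (n : ℕ) :
    prodEl act L s t a (n + 1) = el act L s t a * prodEl act L s t (a + 1) n := rfl

theorem prodEl_zero (a : ℤ) : prodEl act L s t a 0 = 1 := rfl

theorem prodEl_one (a : ℤ) : prodEl act L s t a 1 = el act L s t a := by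
  rw [prodEl_succ, prodEl_zero, mul_one]

theorem altP_succ (a : ℤ) (n : ℕ) :
    altP s t a (n + 1) = (if a % 2 = 0 then s else t) * altP s t (a + 1) n := rfl

theorem altP_zero (a : ℤ) : altP s t a 0 = 1 := rfl

theorem altP_one (a : ℤ) : altP s t a 1 = (if a % 2 = 0 then s else t) := by
  rw [altP_succ, altP_zero, mul_one]

theorem prodEl_add (n₁ : ℕ) : ∀ (n₂ : ℕ) (a : ℤ),
    prodEl act L s t a (n₁ + n₂) =
      prodEl act L s t a n₁ * prodEl act L s t (a + n₁) n₂ := by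
  induction n₁ with
  | zero => intro n₂ a; simp [prodEl_zero]
  | succ n ih =>
      intro n₂ a
      have h : n + 1 + n₂ = (n + n₂) + 1 := by omega
      rw [h, prodEl_succ, ih n₂ (a + 1), prodEl_succ, mul_assoc]
      congr 2
      push_cast
      ring

theorem altP_add (n₁ : ℕ) : ∀ (n₂ : ℕ) (a : ℤ),
    altP s t a (n₁ + n₂) = altP s t a n₁ * altP s t (a + n₁) n₂ := by
  induction n₁ with
  | zero => intro n₂ a; simp [altP_zero]
  | succ n ih =>
      intro n₂ a
      have h : n + 1 + n₂ = (n + n₂) + 1 := by omega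
      rw [h, altP_succ, ih n₂ (a + 1), altP_succ, mul_assoc]
      congr 3
      push_cast
      ring

theorem prodEl_succ_end (a : ℤ) (n : ℕ) :
    prodEl act L s t a (n + 1) = prodEl act L s t a n * el act L s t (a + n) := by
  rw [prodEl_add act L s t n 1 a, prodEl_one]

theorem prodEl_nodel (n : ℕ) : ∀ a : ℤ,
    (∀ j : ℕ, j < n → act L ((s * t) ^ (a + j) * s) ≠ L) →
    prodEl act L s t a n = altP s t a n := by
  induction n with
  | zero => intro a _; rfl
  | succ n ih =>
      intro a h
      rw [prodEl_succ, altP_succ]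
      have h0 : act L ((s * t) ^ a * s) ≠ L := by
        have := h 0 (by omega); simpa using this
      have : el act L s t a = (if a % 2 = 0 then s else t) := by
        rw [el, if_neg h0]
      rw [this, ih (a + 1) (fun j hj => by
        have := h (j + 1) (by omega)
        have harith : a + 1 + (j : ℤ) = a + ((j : ℕ) + 1 : ℕ) := by push_cast; ring
        rw [harith]
        exact this)]

theorem altP_even (k : ℕ) : ∀ a : ℤ,
    altP s t a (2 * k) = (if a % 2 = 0 then s * t else t * s) ^ k := by
  induction k with
  | zero => intro a; simp [altP_zero]
  | succ k ih =>
      intro a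
      have h : 2 * (k + 1) = (2 * k) + 1 + 1 := by ring
      rw [h, altP_succ, altP_succ, ih (a + 1 + 1)]
      rcases Int.emod_two_eq a with h | h
      · have ha1 : (a + 1) % 2 = 1 := by omega
        have ha2 : (a + 1 + 1) % 2 = 0 := by omega
        simp only [h, ha1, ha2, if_pos, one_ne_zero, if_neg, if_true]
        norm_num
        rw [pow_succ' (s * t) k, mul_assoc]
      · have ha1 : (a + 1) % 2 = 0 := by omega
        have ha2 : (a + 1 + 1) % 2 = 1 := by omega
        simp only [h, ha1, ha2]
        norm_num
        rw [pow_succ' (t * s) k, mul_assoc]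

theorem altP_odd (k : ℕ) (a : ℤ) :
    altP s t a (2 * k + 1) =
      (if a % 2 = 0 then s * t else t * s) ^ k * (if a % 2 = 0 then s else t) := by
  rw [altP_add s t (2 * k) 1 a, altP_even, altP_one]
  have hp : (a + ((2 * k : ℕ) : ℤ)) % 2 = a % 2 := by push_cast; omega
  rw [hp]

theorem altP_pair_even (hs : s * s = 1) (ht : t * t = 1) (k : ℕ) (a b : ℤ)
    (hab : a % 2 ≠ b % 2) :
    altP s t a (2 * k) * altP s t b (2 * k) = 1 := by
  rw [altP_even, altP_even]
  rcases Int.emod_two_eq a with h | h <;> rcases Int.emod_two_eq b with h' | h'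
  · exact absurd (h.trans h'.symm) hab
  · simp only [h, h']
    norm_num
    exact pow_mul_pow_rev s t hs ht k
  · simp only [h, h']
    norm_num
    exact pow_mul_pow_rev t s ht hs k
  · exact absurd (h.trans h'.symm) hab

theorem altP_pair_odd (hs : s * s = 1) (ht : t * t = 1) (k : ℕ) (a b : ℤ)
    (hab : a % 2 = b % 2) :
    altP s t a (2 * k + 1) * altP s t b (2 * k + 1) = 1 := by
  rw [altP_odd, altP_odd, ← hab]
  rcases Int.emod_two_eq a with h | h
  · simp only [h]
    norm_num
    exact pow_mul_invol_sq s t hs ht k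
  · simp only [h]
    norm_num
    exact pow_mul_invol_sq t s ht hs k

end Core2

section Core3

variable (act : O → W → O) (L : O) (s t : W)
variable (h1 : ∀ L : O, act L 1 = L)
    (h2 : ∀ (L : O) (u v : W), act L (u * v) = act (act L u) v)
    (hs : s * s = 1) (ht : t * t = 1)

include hs ht in
theorem two_block (e : ℕ) (c : ℤ)
    (hdel : ∀ k : ℤ, (act L ((s * t) ^ k * s) = L) ↔ ((e : ℤ) + 1) ∣ (k - c)) :
    prodEl act L s t c (2 * (e + 1)) = 1 := by
  have hsplit : 2 * (e + 1) = (1 + e) + (1 + e) := by ring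
  rw [hsplit, prodEl_add, prodEl_add, prodEl_add, prodEl_one, prodEl_one]
  push_cast
  have hel : ∀ k : ℤ, ((e : ℤ) + 1) ∣ (k - c) → el act L s t k = 1 := by
    intro k hk
    rw [el, if_pos ((hdel k).mpr hk)]
  have helc : el act L s t c = 1 := hel c (by simp)
  have helc2 : el act L s t (c + (1 + (e : ℤ))) = 1 := hel _ ⟨1, by ring⟩
  have hnd : ∀ (x : ℤ), (∀ j : ℕ, j < e → ¬ ((e : ℤ) + 1) ∣ (x + j - c)) →
      prodEl act L s t x e = altP s t x e := by
    intro x hx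
    apply prodEl_nodel
    intro j hj hcon
    exact hx j hj ((hdel _).mp hcon)
  have hb1 : prodEl act L s t (c + 1) e = altP s t (c + 1) e := by
    apply hnd
    intro j hj hdvd
    have harith : c + 1 + (j : ℤ) - c = 1 + j := by ring
    rw [harith] at hdvd
    have := Int.le_of_dvd (by positivity) hdvd
    omega
  have hb2 : prodEl act L s t (c + (1 + (e : ℤ)) + 1) e
      = altP s t (c + (1 + (e : ℤ)) + 1) e := by
    apply hnd
    intro j hj hdvd
    have harith : c + (1 + (e : ℤ)) + 1 + (j : ℤ) - c
        = ((e : ℤ) + 1) + (1 + j) := by ring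
    rw [harith] at hdvd
    have hdvd2 : ((e : ℤ) + 1) ∣ (1 + (j : ℤ)) := (dvd_add_right ⟨1, by ring⟩).mp hdvd
    have := Int.le_of_dvd (by positivity) hdvd2
    omega
  rw [helc, helc2, one_mul, one_mul, hb1, hb2]
  have hpar : (c + (1 + (e : ℤ)) + 1) = (c + 1) + ((e : ℤ) + 1) := by ring
  rcases Nat.even_or_odd e with ⟨k, hk⟩ | ⟨k, hk⟩
  · -- e even: parities of the two block starts differ
    have he : e = 2 * k := by omega
    rw [he]
    apply altP_pair_even s t hs ht k _ _
    push_cast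
    omega
  · have he : e = 2 * k + 1 := by omega
    rw [he]
    apply altP_pair_odd s t hs ht k _ _
    push_cast
    omega

include hs ht in
theorem blocks (e : ℕ) (q : ℕ) : ∀ c : ℤ,
    (∀ k : ℤ, (act L ((s * t) ^ k * s) = L) ↔ ((e : ℤ) + 1) ∣ (k - c)) →
    prodEl act L s t c (2 * (e + 1) * q) = 1 := by
  induction q with
  | zero =>
      intro c _
      have h : 2 * (e + 1) * 0 = 0 := by ring
      rw [h, prodEl_zero]
  | succ q ih =>
      intro c hdel
      have h : 2 * (e + 1) * (q + 1) = 2 * (e + 1) + 2 * (e + 1) * q := by ring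
      rw [h, prodEl_add, two_block act L s t hs ht e c hdel, one_mul]
      apply ih
      intro k
      rw [hdel k]
      have hd2 : ((e : ℤ) + 1) ∣ ((2 * (e + 1) : ℕ) : ℤ) := by
        push_cast
        exact ⟨2, by ring⟩
      constructor
      · intro hkc
        have harith : k - (c + ((2 * (e + 1) : ℕ) : ℤ))
            = (k - c) - ((2 * (e + 1) : ℕ) : ℤ) := by ring
        rw [harith]
        exact dvd_sub hkc hd2
      · intro hkc
        have harith : k - c = (k - (c + ((2 * (e + 1) : ℕ) : ℤ)))
            + ((2 * (e + 1) : ℕ) : ℤ) := by ring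
        rw [harith]
        exact dvd_add hkc hd2

theorem el_period (m : ℕ) (hr : (s * t) ^ m = 1) (a : ℤ) :
    el act L s t (a + 2 * (m : ℤ)) = el act L s t a := by
  have hz : (s * t) ^ (a + 2 * (m : ℤ)) = (s * t) ^ a := by
    rw [zpow_add]
    have h2m : (s * t) ^ (2 * (m : ℤ)) = 1 := by
      rw [show (2 * (m : ℤ)) = ((m * 2 : ℕ) : ℤ) by push_cast; ring, zpow_natCast,
        pow_mul, hr, one_pow]
    rw [h2m, mul_one]
  have hp : (a + 2 * (m : ℤ)) % 2 = a % 2 := by omega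
  rw [el, el, hz, hp]

theorem rot_iff (m : ℕ) (hr : (s * t) ^ m = 1) (a : ℤ) :
    (prodEl act L s t a (2 * m) = 1) ↔ (prodEl act L s t (a + 1) (2 * m) = 1) := by
  have key : el act L s t a * prodEl act L s t (a + 1) (2 * m)
      = prodEl act L s t a (2 * m) * el act L s t a := by
    have h1' : prodEl act L s t a (2 * m + 1)
        = el act L s t a * prodEl act L s t (a + 1) (2 * m) := prodEl_succ act L s t a (2 * m)
    have h2' := prodEl_succ_end act L s t a (2 * m)
    rw [h1'] at h2'
    rw [show (a + ((2 * m : ℕ) : ℤ)) = a + 2 * (m : ℤ) by push_cast; ring,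
      el_period act L s t m hr a] at h2'
    exact h2'
  constructor
  · intro h
    rw [h, one_mul] at key
    exact mul_left_cancel (key.trans (mul_one _).symm)
  · intro h
    rw [h, mul_one] at key
    exact mul_right_cancel (((one_mul (el act L s t a)).trans key).symm)

theorem rot_shift (m : ℕ) (hr : (s * t) ^ m = 1) (n : ℕ) : ∀ a : ℤ,
    (prodEl act L s t a (2 * m) = 1) ↔ (prodEl act L s t (a + n) (2 * m) = 1) := by
  induction n with
  | zero => intro a; simp
  | succ n ih =>
      intro a
      refine (rot_iff act L s t m hr a).trans ?_
      refine (ih (a + 1)).trans ?_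
      rw [show a + 1 + (n : ℤ) = a + ((n + 1 : ℕ) : ℤ) by push_cast; ring]

theorem rot_to_zero (m : ℕ) (hr : (s * t) ^ m = 1) (c : ℤ)
    (h : prodEl act L s t c (2 * m) = 1) : prodEl act L s t 0 (2 * m) = 1 := by
  rcases le_or_gt 0 c with hc | hc
  · apply (rot_shift act L s t m hr c.toNat 0).mpr
    rw [show ((0 : ℤ) + c.toNat) = c by omega]
    exact h
  · have := (rot_shift act L s t m hr (-c).toNat c).mp h
    rw [show (c + ((-c).toNat : ℤ)) = 0 by omega] at this
    exact this

include h1 h2 hs ht in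
theorem core_main (m : ℕ) (hm : 0 < m) (hr : (s * t) ^ m = 1) :
    prodEl act L s t 0 (2 * m) = 1 := by
  by_cases hex : ∃ c : ℤ, act L ((s * t) ^ c * s) = L
  · obtain ⟨c, hc⟩ := hex
    set H : AddSubgroup ℤ :=
      { carrier := {z : ℤ | act L ((s * t) ^ z) = L}
        zero_mem' := by
          simp only [Set.mem_setOf_eq, zpow_zero]
          exact h1 L
        add_mem' := by
          intro x y hx hy
          simp only [Set.mem_setOf_eq] at *
          rw [zpow_add]
          exact act_stab_mul act L h1 h2 hx hy
        neg_mem' := by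
          intro x hx
          simp only [Set.mem_setOf_eq] at *
          have h := h2 L ((s * t) ^ x) ((s * t) ^ (-x))
          rw [← zpow_add, add_neg_cancel, zpow_zero, h1, hx] at h
          exact h.symm } with hH
    have memH : ∀ z : ℤ, z ∈ H ↔ act L ((s * t) ^ z) = L := fun z => Iff.rfl
    obtain ⟨g, hg⟩ := Int.subgroup_cyclic H
    have hmem : ∀ z : ℤ, (act L ((s * t) ^ z) = L) ↔ g ∣ z := by
      intro z
      rw [← memH, hg, AddSubgroup.mem_closure_singleton]
      constructor
      · rintro ⟨n, hn⟩
        exact ⟨n, by rw [← hn]; simp [smul_eq_mul, mul_comm]⟩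
      · rintro ⟨n, hn⟩
        exact ⟨n, by rw [hn]; simp [smul_eq_mul, mul_comm]⟩
    have hgm : g ∣ (m : ℤ) := by
      apply (hmem (m : ℤ)).mp
      rw [zpow_natCast, hr, h1]
    have hg0 : g ≠ 0 := by
      intro h0
      rw [h0] at hgm
      have : (m : ℤ) = 0 := zero_dvd_iff.mp hgm
      omega
    obtain ⟨e, he⟩ : ∃ e : ℕ, g.natAbs = e + 1 := by
      have : 0 < g.natAbs := Int.natAbs_pos.mpr hg0
      exact ⟨g.natAbs - 1, by omega⟩
    have hge : ∀ z : ℤ, (((e : ℤ) + 1) ∣ z) ↔ g ∣ z := by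
      intro z
      rw [show ((e : ℤ) + 1) = ((e + 1 : ℕ) : ℤ) by push_cast; ring, ← he]
      exact Int.natAbs_dvd
    have hdel : ∀ k : ℤ, (act L ((s * t) ^ k * s) = L) ↔ ((e : ℤ) + 1) ∣ (k - c) := by
      intro k
      constructor
      · intro hk
        apply (hge _).mpr
        apply (hmem _).mp
        have := act_stab_mul act L h1 h2 hk hc
        rwa [refl_mul_refl s t hs ht k c] at this
      · intro hdvd
        have h3 : act L ((s * t) ^ (k - c)) = L := (hmem _).mpr ((hge _).mp hdvd)
        have := act_stab_mul act L h1 h2 h3 hc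
        rwa [← mul_assoc, ← zpow_add, sub_add_cancel] at this
    have hdm : (e + 1) ∣ m := by
      apply Int.natCast_dvd_natCast.mp
      push_cast
      exact (hge _).mpr hgm
    obtain ⟨q, hq⟩ := hdm
    have hb := blocks act L s t hs ht e q c hdel
    rw [show 2 * (e + 1) * q = 2 * m by rw [hq]; ring] at hb
    exact rot_to_zero act L s t m hr c hb
  · push_neg at hex
    have hnd : prodEl act L s t 0 (2 * m) = altP s t 0 (2 * m) := by
      apply prodEl_nodel
      intro j _
      exact hex _
    rw [hnd, altP_even]
    norm_num
    exact hr

end Core3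

section Conn

variable (cs : CoxeterSystem M W) (act : O → W → O) (L : O)
variable (h1 : ∀ L : O, act L 1 = L)
    (h2 : ∀ (L : O) (u v : W), act L (u * v) = act (act L u) v)

/-- The word `(i j)^n`. -/
def pairWord (i j : B) : ℕ → List B
  | 0 => []
  | n + 1 => i :: j :: pairWord i j n

theorem pairWord_zero (i j : B) : pairWord i j 0 = [] := rfl

theorem pairWord_succ (i j : B) (n : ℕ) :
    pairWord i j (n + 1) = i :: j :: pairWord i j n := rfl

theorem wordProd_pairWord (i j : B) (n : ℕ) :
    cs.wordProd (pairWord i j n) = (cs.simple i * cs.simple j) ^ n := by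
  induction n with
  | zero => simp [pairWord_zero]
  | succ n ih =>
      rw [pairWord_succ, cs.wordProd_cons, cs.wordProd_cons, ih, pow_succ', mul_assoc]

include h1 h2 in
theorem bword_pairWord (i j : B) (n : ℕ) : ∀ q : ℕ,
    bword cs act (act L ((cs.simple i * cs.simple j) ^ (q : ℤ))) (pairWord i j n)
      = prodEl act L (cs.simple i) (cs.simple j) (2 * (q : ℤ)) (2 * n) := by
  have hs : cs.simple i * cs.simple i = 1 := cs.simple_mul_simple_self i
  have ht : cs.simple j * cs.simple j = 1 := cs.simple_mul_simple_self j
  set s := cs.simple i with hsdef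
  set t := cs.simple j with htdef
  induction n with
  | zero =>
      intro q
      rw [pairWord_zero, show 2 * 0 = 0 from rfl, prodEl_zero]
      rfl
  | succ n ih =>
      intro q
      rw [pairWord_succ]
      simp only [bword]
      rw [← hsdef, ← htdef]
      have key1 : (s * t) ^ (q : ℤ) * s * ((s * t) ^ (q : ℤ))⁻¹
          = (s * t) ^ (2 * (q : ℤ)) * s := by
        rw [← zpow_neg, mul_assoc, s_zpow_comm s t hs ht (-(q : ℤ)), neg_neg,
          ← mul_assoc, ← zpow_add, two_mul]
      have key2 : ((s * t) ^ (q : ℤ) * s) * t * ((s * t) ^ (q : ℤ) * s)⁻¹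
          = (s * t) ^ (2 * (q : ℤ) + 1) * s := by
        rw [mul_inv_rev, s_inv s hs, ← zpow_neg]
        have e1 : (s * t) ^ (q : ℤ) * s * t * (s * (s * t) ^ (-(q : ℤ)))
            = (s * t) ^ (q : ℤ) * (s * t) * (s * (s * t) ^ (-(q : ℤ))) := by
          group
        rw [e1, s_zpow_comm s t hs ht (-(q : ℤ)), neg_neg]
        have e2 : (s * t) ^ (q : ℤ) * (s * t) * ((s * t) ^ (q : ℤ) * s)
            = ((s * t) ^ (q : ℤ) * (s * t) ^ (1 : ℤ) * (s * t) ^ (q : ℤ)) * s := by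
          rw [zpow_one]; group
        rw [e2, ← zpow_add, ← zpow_add,
          show (q : ℤ) + 1 + (q : ℤ) = 2 * (q : ℤ) + 1 by ring]
      -- the first letter
      have hc1 : (act L ((s * t) ^ (q : ℤ) * s) = act L ((s * t) ^ (q : ℤ)))
          = (act L ((s * t) ^ (2 * (q : ℤ)) * s) = L) := by
        rw [h2 L _ s, act_shift act L h1 h2 ((s * t) ^ (q : ℤ)) s, key1]
      have he1 : (if act L ((s * t) ^ (q : ℤ) * s) = act L ((s * t) ^ (q : ℤ))
            then (1 : W) else s) = el act L s t (2 * (q : ℤ)) := by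
        rw [el, hc1, if_pos (show (2 * (q : ℤ)) % 2 = 0 by omega)]
      -- the parameter after one step
      have hp1 : act (act L ((s * t) ^ (q : ℤ))) s = act L ((s * t) ^ (q : ℤ) * s) :=
        (h2 L _ s).symm
      -- the second letter
      have hc2 : (act (act L ((s * t) ^ (q : ℤ) * s)) t = act L ((s * t) ^ (q : ℤ) * s))
          = (act L ((s * t) ^ (2 * (q : ℤ) + 1) * s) = L) := by
        rw [act_shift act L h1 h2 ((s * t) ^ (q : ℤ) * s) t, key2]
      have he2 : (if act (act L ((s * t) ^ (q : ℤ) * s)) t = act L ((s * t) ^ (q : ℤ) * s)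
            then (1 : W) else t) = el act L s t (2 * (q : ℤ) + 1) := by
        rw [el, hc2, if_neg (show ¬ (2 * (q : ℤ) + 1) % 2 = 0 by omega)]
      -- the parameter after two steps
      have hp2 : act (act L ((s * t) ^ (q : ℤ) * s)) t
          = act L ((s * t) ^ ((q + 1 : ℕ) : ℤ)) := by
        rw [← h2, mul_assoc, ← zpow_add_one]
        push_cast
        ring_nf
      rw [hp1, he1, he2, hp2, ih (q + 1),
        show 2 * (n + 1) = (2 * n) + 1 + 1 by ring, prodEl_succ, prodEl_succ,
        show (2 * (q : ℤ)) + 1 + 1 = 2 * ((q + 1 : ℕ) : ℤ) by push_cast; ring]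

include h1 h2 in
theorem bword_pairWord_one (i j : B) (n : ℕ) :
    bword cs act L (pairWord i j n)
      = prodEl act L (cs.simple i) (cs.simple j) 0 (2 * n) := by
  have h := bword_pairWord cs act L h1 h2 i j n 0
  rw [show ((0 : ℕ) : ℤ) = 0 from rfl, zpow_zero, h1, show 2 * (0 : ℤ) = 0 by ring] at h
  exact h

end Conn

section SDPSec

variable (act : O → W → O)
variable (h1 : ∀ L : O, act L 1 = L)
    (h2 : ∀ (L : O) (u v : W), act L (u * v) = act (act L u) v)

/-- Precomposition with the action of `w` as a multiplicative automorphism of `O → W`. -/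
def actAut (w : W) : MulAut (O → W) where
  toFun f := fun L => f (act L w)
  invFun f := fun L => f (act L w⁻¹)
  left_inv f := by
    funext L
    show f (act (act L w⁻¹) w) = f L
    rw [← h2, inv_mul_cancel, h1]
  right_inv f := by
    funext L
    show f (act (act L w) w⁻¹) = f L
    rw [← h2, mul_inv_cancel, h1]
  map_mul' f g := rfl

/-- The homomorphism `W →* MulAut (O → W)` induced by the action. -/
def actHom : W →* MulAut (O → W) where
  toFun := actAut act h1 h2
  map_one' := MulEquiv.ext fun f => funext fun L => by
    show f (act L 1) = f L
    rw [h1]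
  map_mul' u v := MulEquiv.ext fun f => funext fun L => by
    show f (act L (u * v)) = f (act (act L u) v)
    rw [h2]

/-- The wreath-like semidirect product recording both `b_L` and the action. -/
abbrev SDP := SemidirectProduct (O → W) W (actHom act h1 h2)

variable (cs : CoxeterSystem M W)

/-- The candidate images of the simple reflections in the semidirect product. -/
def psi : B → SDP act h1 h2 := fun i =>
  ⟨fun L => if act L (cs.simple i) = L then 1 else cs.simple i, cs.simple i⟩

theorem psi_right (i : B) : (psi act h1 h2 cs i).right = cs.simple i := rfl

theorem prod_psi_right (ω : List B) :
    ((ω.map (psi act h1 h2 cs)).prod).right = cs.wordProd ω := by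
  induction ω with
  | nil => simp
  | cons i ω ih =>
      rw [List.map_cons, List.prod_cons, SemidirectProduct.mul_right, psi_right,
        ih, cs.wordProd_cons]

theorem prod_psi_left (ω : List B) : ∀ L : O,
    ((ω.map (psi act h1 h2 cs)).prod).left L = bword cs act L ω := by
  induction ω with
  | nil =>
      intro L
      rw [List.map_nil, List.prod_nil, SemidirectProduct.one_left]
      exact Pi.one_apply L
  | cons i ω ih =>
      intro L
      rw [List.map_cons, List.prod_cons, SemidirectProduct.mul_left, Pi.mul_apply]
      show (if act L (cs.simple i) = L then (1 : W) else cs.simple i) *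
          ((ω.map (psi act h1 h2 cs)).prod).left (act L (cs.simple i))
        = bword cs act L (i :: ω)
      rw [ih (act L (cs.simple i))]
      rfl

theorem psi_pow (i j : B) (n : ℕ) :
    (psi act h1 h2 cs i * psi act h1 h2 cs j) ^ n
      = ((pairWord i j n).map (psi act h1 h2 cs)).prod := by
  induction n with
  | zero => rw [pow_zero, pairWord_zero, List.map_nil, List.prod_nil]
  | succ n ih =>
      rw [pow_succ', ih, pairWord_succ, List.map_cons, List.map_cons, List.prod_cons,
        List.prod_cons, mul_assoc]

theorem psi_liftable : ∀ i j : B,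
    (psi act h1 h2 cs i * psi act h1 h2 cs j) ^ (M i j) = 1 := by
  intro i j
  rw [psi_pow]
  set m := M i j with hm
  have hright : (((pairWord i j m).map (psi act h1 h2 cs)).prod).right = 1 := by
    rw [prod_psi_right, wordProd_pairWord, hm, cs.simple_mul_simple_pow]
  have hleft : ∀ L : O, (((pairWord i j m).map (psi act h1 h2 cs)).prod).left L = 1 := by
    intro L
    rw [prod_psi_left, bword_pairWord_one cs act L h1 h2]
    rcases Nat.eq_zero_or_pos m with h0 | hpos
    · rw [h0, show 2 * 0 = 0 from rfl, prodEl_zero]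
    · exact core_main act L (cs.simple i) (cs.simple j) h1 h2
        (cs.simple_mul_simple_self i) (cs.simple_mul_simple_self j) m hpos
        (cs.simple_mul_simple_pow i j)
  refine SemidirectProduct.ext ?_ ?_
  · funext L
    rw [hleft L, SemidirectProduct.one_left, Pi.one_apply]
  · rw [hright, SemidirectProduct.one_right]

end SDPSec


theorem statement_1 (cs : CoxeterSystem M W) (act : O → W → O)
    (hact_one : ∀ L : O, act L 1 = L)
    (hact_mul : ∀ (L : O) (u v : W), act L (u * v) = act (act L u) v)
    (L : O) :
    (∀ x y : List B, cs.wordProd x = cs.wordProd y →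
      bword cs act L x = bword cs act L y) ∧
    ∃ b : W → W, ∀ ω : List B, b (cs.wordProd ω) = bword cs act L ω := by
  have hlift := psi_liftable act hact_one hact_mul cs
  set Φ : W →* SDP act hact_one hact_mul :=
    cs.lift ⟨psi act hact_one hact_mul cs, hlift⟩ with hPhi
  have hsimple : ∀ i : B, Φ (cs.simple i) = psi act hact_one hact_mul cs i :=
    fun i => cs.lift_apply_simple hlift i
  have hprod : ∀ ω : List B,
      Φ (cs.wordProd ω) = ((ω.map (psi act hact_one hact_mul cs)).prod) := by
    intro ω
    induction ω with
    | nil => rw [cs.wordProd_nil, map_one, List.map_nil, List.prod_nil]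
    | cons i ω ih =>
        rw [cs.wordProd_cons, map_mul, hsimple, ih, List.map_cons, List.prod_cons]
  have key : ∀ ω : List B, (Φ (cs.wordProd ω)).left L = bword cs act L ω := by
    intro ω
    rw [hprod ω, prod_psi_left]
  refine ⟨fun x y hxy => ?_, ⟨fun w => (Φ w).left L, fun ω => key ω⟩⟩
  rw [← key x, ← key y, hxy]

end PaperStmt
end
end

section
/- Let (W,S) be a Coxeter system, let 𝔬 be a set of monodromy parameters, and let L ∈ 𝔬. Then W_L° equals the subgroup of W generated by the reflections r ∈ ℛ(W) with L·r = L, i.e., W_L° = ⟨ℛ(W) ∩ W_L⟩. -/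
/-!
Statement 5: `W_L°` equals the subgroup of `W` generated by the reflections `r` with
`L·r = L`, i.e. `W_L° = ⟨ℛ(W) ∩ W_L⟩`.
-/

attribute [local instance] Classical.propDecidable

noncomputable section

namespace PaperStmt

variable {B W O : Type*} [Group W] {M : CoxeterMatrix B}

/-- The endoscopic group `W_L° = {w ∈ W_L : b_L(w) = e}`, as a subset of `W`. -/
def WLcirc (act : O → W → O) (L : O) (b : W → W) : Set W :=
  {w : W | act L w = L ∧ b w = 1}

section aux

variable (cs : CoxeterSystem M W) (act : O → W → O)
    (hact_one : ∀ L : O, act L 1 = L)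
    (hact_mul : ∀ (L : O) (u v : W), act L (u * v) = act (act L u) v)

include hact_one hact_mul

lemma bword_append : ∀ (ω τ : List B) (L : O),
    bword cs act L (ω ++ τ) = bword cs act L ω * bword cs act (act L (cs.wordProd ω)) τ := by
  intro ω
  induction ω with
  | nil => intro τ L; simp [bword, CoxeterSystem.wordProd_nil, hact_one]
  | cons i ω ih =>
      intro τ L
      simp only [List.cons_append, bword, CoxeterSystem.wordProd_cons, hact_mul, mul_assoc]
      rw [ih]

lemma bword_reverse : ∀ (ω : List B) (L : O),
    bword cs act (act L (cs.wordProd ω)) ω.reverse = (bword cs act L ω)⁻¹ := by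
  intro ω
  induction ω with
  | nil => intro L; simp [bword]
  | cons i ω ih =>
      intro L
      have h1 : act L (cs.wordProd (i :: ω)) = act (act L (cs.simple i)) (cs.wordProd ω) := by
        rw [CoxeterSystem.wordProd_cons, hact_mul]
      rw [List.reverse_cons, bword_append cs act hact_one hact_mul, h1,
        ih (act L (cs.simple i))]
      have h2 : act (act (act L (cs.simple i)) (cs.wordProd ω)) (cs.wordProd ω.reverse)
          = act L (cs.simple i) := by
        rw [CoxeterSystem.wordProd_reverse, ← hact_mul, mul_inv_cancel, hact_one]
      rw [h2]
      have h3 : act (act L (cs.simple i)) (cs.simple i) = L := by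
        rw [← hact_mul, CoxeterSystem.simple_mul_simple_self, hact_one]
      simp only [bword, h3, mul_one, mul_inv_rev]
      by_cases h : act L (cs.simple i) = L
      · rw [if_pos h, if_pos h.symm]; simp
      · rw [if_neg h, if_neg (fun hc => h hc.symm)]
        simp [cs.inv_simple]

lemma bword_eq_wordProd : ∀ (ω : List B) (L : O),
    (∀ p (i : B) q, ω = p ++ i :: q →
      act (act L (cs.wordProd p)) (cs.simple i) ≠ act L (cs.wordProd p)) →
    bword cs act L ω = cs.wordProd ω := by
  intro ω
  induction ω with
  | nil => intro L _; simp [bword, CoxeterSystem.wordProd_nil]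
  | cons i ω ih =>
      intro L h
      have h0 : act L (cs.simple i) ≠ L := by
        have := h [] i ω rfl
        rwa [CoxeterSystem.wordProd_nil, hact_one] at this
      have htail : ∀ p (j : B) q, ω = p ++ j :: q →
          act (act (act L (cs.simple i)) (cs.wordProd p)) (cs.simple j)
            ≠ act (act L (cs.simple i)) (cs.wordProd p) := by
        intro p j q hpq
        have := h (i :: p) j q (by rw [hpq]; rfl)
        rwa [CoxeterSystem.wordProd_cons, hact_mul] at this
      rw [bword, if_neg h0, ih (act L (cs.simple i)) htail, CoxeterSystem.wordProd_cons]

lemma main_lemma (L : O) : ∀ (n : ℕ) (ω : List B), ω.length = n → bword cs act L ω = 1 →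
    cs.wordProd ω ∈ Subgroup.closure {r : W | cs.IsReflection r ∧ act L r = L} := by
  intro n
  induction n using Nat.strong_induction_on with
  | _ n ih =>
    intro ω hlen hb1
    by_cases hdel : ∃ p : List B, ∃ i : B, ∃ q : List B, ω = p ++ i :: q ∧
        act (act L (cs.wordProd p)) (cs.simple i) = act L (cs.wordProd p)
    · obtain ⟨p, i, q, rfl, hdi⟩ := hdel
      set L' := act L (cs.wordProd p) with hL'
      have hbpq : bword cs act L (p ++ q) = 1 := by
        rw [bword_append cs act hact_one hact_mul] at hb1 ⊢
        rw [show bword cs act L' (i :: q) = bword cs act L' q by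
          rw [bword, if_pos hdi, hdi, one_mul]] at hb1
        exact hb1
      have hlt : (p ++ q).length < n := by
        subst hlen; simp [List.length_append]
      have hrec := ih _ hlt (p ++ q) rfl hbpq
      have ht_refl : cs.IsReflection (cs.wordProd p * cs.simple i * (cs.wordProd p)⁻¹) :=
        ⟨cs.wordProd p, i, rfl⟩
      have ht_act : act L (cs.wordProd p * cs.simple i * (cs.wordProd p)⁻¹) = L := by
        rw [hact_mul, hact_mul, hdi, hL', ← hact_mul, mul_inv_cancel, hact_one]
      have hsplit : cs.wordProd (p ++ i :: q) =
          (cs.wordProd p * cs.simple i * (cs.wordProd p)⁻¹) * cs.wordProd (p ++ q) := by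
        rw [CoxeterSystem.wordProd_append, CoxeterSystem.wordProd_append,
          CoxeterSystem.wordProd_cons]
        group
      rw [hsplit]
      exact mul_mem (Subgroup.subset_closure ⟨ht_refl, ht_act⟩) hrec
    · push_neg at hdel
      have := bword_eq_wordProd cs act hact_one hact_mul ω L
        (fun p i q hpq => hdel p i q hpq)
      rw [this] at hb1
      rw [hb1]
      exact one_mem _

end aux

/-- Here `b : W → W` is the descent of `b_L` to `W` (well defined by
Statement 1). -/
theorem statement_5 (cs : CoxeterSystem M W) (act : O → W → O)
    (hact_one : ∀ L : O, act L 1 = L)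
    (hact_mul : ∀ (L : O) (u v : W), act L (u * v) = act (act L u) v)
    (L : O) (b : W → W)
    (hb : ∀ ω : List B, b (cs.wordProd ω) = bword cs act L ω) :
    WLcirc act L b =
      (Subgroup.closure {r : W | cs.IsReflection r ∧ act L r = L} : Set W) := by
  have hb1 : b 1 = 1 := by
    have := hb []
    rwa [CoxeterSystem.wordProd_nil] at this
  -- the set WLcirc is a subgroup
  have hmul : ∀ u v, u ∈ WLcirc act L b → v ∈ WLcirc act L b → u * v ∈ WLcirc act L b := by
    rintro u v ⟨hu1, hu2⟩ ⟨hv1, hv2⟩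
    obtain ⟨ωu, rfl⟩ := cs.wordProd_surjective u
    obtain ⟨ωv, rfl⟩ := cs.wordProd_surjective v
    constructor
    · rw [hact_mul, hu1, hv1]
    · rw [← CoxeterSystem.wordProd_append, hb,
        bword_append cs act hact_one hact_mul, hu1, ← hb, ← hb, hu2, hv2, one_mul]
  have hinv : ∀ u, u ∈ WLcirc act L b → u⁻¹ ∈ WLcirc act L b := by
    rintro u ⟨hu1, hu2⟩
    obtain ⟨ωu, rfl⟩ := cs.wordProd_surjective u
    constructor
    · conv_lhs => rw [← hu1]
      rw [← hact_mul, mul_inv_cancel, hact_one]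
    · rw [← CoxeterSystem.wordProd_reverse, hb]
      have := bword_reverse cs act hact_one hact_mul ωu L
      rw [hu1] at this
      rw [this, ← hb, hu2, inv_one]
  ext w
  constructor
  · rintro ⟨hw1, hw2⟩
    obtain ⟨ω, rfl⟩ := cs.wordProd_surjective w
    rw [hb] at hw2
    exact main_lemma cs act hact_one hact_mul L ω.length ω rfl hw2
  · intro hw
    refine Subgroup.closure_induction ?_ ⟨hact_one L, hb1⟩ (fun u v _ _ hu hv => hmul u v hu hv)
      (fun u _ hu => hinv u hu) hw
    -- generators are in WLcirc
    rintro r ⟨⟨u, i, rfl⟩, hr⟩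
    obtain ⟨ωu, rfl⟩ := cs.wordProd_surjective u
    refine ⟨hr, ?_⟩
    -- show b r = 1
    have hword : cs.wordProd ωu * cs.simple i * (cs.wordProd ωu)⁻¹
        = cs.wordProd (ωu ++ i :: ωu.reverse) := by
      rw [CoxeterSystem.wordProd_append, CoxeterSystem.wordProd_cons,
        CoxeterSystem.wordProd_reverse]
      group
    have hfix : act (act L (cs.wordProd ωu)) (cs.simple i) = act L (cs.wordProd ωu) := by
      have h1 := hr
      rw [hact_mul, hact_mul] at h1
      have h3 := congrArg (fun X => act X (cs.wordProd ωu)) h1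
      rw [← hact_mul, inv_mul_cancel, hact_one] at h3
      exact h3
    rw [hword, hb, bword_append cs act hact_one hact_mul]
    rw [show bword cs act (act L (cs.wordProd ωu)) (i :: ωu.reverse)
          = bword cs act (act L (cs.wordProd ωu)) ωu.reverse by
      rw [bword, if_pos hfix, hfix, one_mul]]
    rw [bword_reverse cs act hact_one hact_mul, mul_inv_cancel]

end PaperStmt
end
end

section
/- Let n, v ∈ ℤ with v ≠ 0 and v dividing n, and set d = n/v. Then in ℤ[x,y] one has [v]_{x(d)} · [d]_x = [n]_x and [v]_{y(d)} · [d]_y = [n]_y. -/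
/-!
Statement 7: for `n, v ∈ ℤ` with `v ≠ 0` and `v ∣ n`, setting `d = n/v`, one has
`[v]_{x(d)} · [d]_x = [n]_x` and `[v]_{y(d)} · [d]_y = [n]_y` in `ℤ[x,y]`.
-/

noncomputable section

namespace PaperStmt

/-- `ℤ[x,y]`. -/
abbrev A2 : Type := MvPolynomial (Fin 2) ℤ

/-- The variable `x`. -/
def varX : A2 := MvPolynomial.X 0

/-- The variable `y`. -/
def varY : A2 := MvPolynomial.X 1

/-- The pair of two-colored quantum numbers `([n]_x, [n]_y)` for `n ∈ ℕ`. -/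
def qPair : ℕ → A2 × A2
  | 0 => (0, 0)
  | 1 => (1, 1)
  | n + 2 =>
      (varX * (qPair (n + 1)).2 - (qPair n).1,
        varY * (qPair (n + 1)).1 - (qPair n).2)

/-- The two-colored quantum number `[n]_x`, `n ∈ ℤ` (the recursions of the paper, used in both
directions, force `[-n]_x = -[n]_x`). -/
def qX (n : ℤ) : A2 := if 0 ≤ n then (qPair n.toNat).1 else -(qPair (-n).toNat).1

/-- The two-colored quantum number `[n]_y`, `n ∈ ℤ`. -/
def qY (n : ℤ) : A2 := if 0 ≤ n then (qPair n.toNat).2 else -(qPair (-n).toNat).2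

/-- The `d`-twisted variable `x(d) = [d+1]_x − [d−1]_x`. -/
def twX (d : ℤ) : A2 := qX (d + 1) - qX (d - 1)

/-- The `d`-twisted variable `y(d) = [d+1]_y − [d−1]_y`. -/
def twY (d : ℤ) : A2 := qY (d + 1) - qY (d - 1)


lemma qX_nat (n : ℕ) : qX n = (qPair n).1 := by simp [qX]
lemma qY_nat (n : ℕ) : qY n = (qPair n).2 := by simp [qY]

lemma qX_neg (n : ℤ) : qX (-n) = -qX n := by
  rcases lt_trichotomy n 0 with h | h | h
  · have h1 : 0 ≤ -n := by omega
    have h2 : ¬ (0 ≤ n) := by omega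
    simp [qX, h1, h2, not_lt.mpr h.le]
  · subst h; simp [qX, qPair]
  · have h1 : ¬ (0 ≤ -n) := by omega
    have h2 : 0 ≤ n := by omega
    simp [qX, h1, h2, not_le.mpr h]

lemma qY_neg (n : ℤ) : qY (-n) = -qY n := by
  rcases lt_trichotomy n 0 with h | h | h
  · have h1 : 0 ≤ -n := by omega
    have h2 : ¬ (0 ≤ n) := by omega
    simp [qY, h1, h2, not_lt.mpr h.le]
  · subst h; simp [qY, qPair]
  · have h1 : ¬ (0 ≤ -n) := by omega
    have h2 : 0 ≤ n := by omega
    simp [qY, h1, h2, not_le.mpr h]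

lemma qX_one : qX 1 = 1 := by norm_num [qX, qPair]
lemma qY_one : qY 1 = 1 := by norm_num [qY, qPair]
lemma qX_zero : qX 0 = 0 := by norm_num [qX, qPair]
lemma qY_zero : qY 0 = 0 := by norm_num [qY, qPair]

lemma qX_rec (n : ℤ) : qX (n + 1) = varX * qY n - qX (n - 1) ∧
    qY (n + 1) = varY * qX n - qY (n - 1) := by
  have hnat : ∀ k : ℕ, qX ((k : ℤ) + 1) = varX * qY k - qX ((k : ℤ) - 1) ∧
      qY ((k : ℤ) + 1) = varY * qX k - qY ((k : ℤ) - 1) := by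
    intro k
    cases k with
    | zero =>
        have hx : qX (-1 : ℤ) = -qX 1 := by simpa using qX_neg 1
        have hy : qY (-1 : ℤ) = -qY 1 := by simpa using qY_neg 1
        push_cast
        rw [hx, hy, qX_zero, qY_zero]
        constructor <;> ring
    | succ m =>
        have e1 : ((m : ℤ) + 1) + 1 = ((m + 2 : ℕ) : ℤ) := by push_cast; ring
        have e2 : ((m : ℤ) + 1) - 1 = ((m : ℕ) : ℤ) := by push_cast; ring
        have e3 : (m : ℤ) + 1 = ((m + 1 : ℕ) : ℤ) := by push_cast; ring
        push_cast
        rw [e1, e2, e3]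
        simp only [qX_nat, qY_nat]
        exact ⟨rfl, rfl⟩
  rcases le_or_gt 0 n with h | h
  · obtain ⟨k, rfl⟩ : ∃ k : ℕ, n = (k : ℤ) := ⟨n.toNat, by omega⟩
    exact hnat k
  · obtain ⟨k, hk⟩ : ∃ k : ℕ, n = -((k : ℤ) + 1) := ⟨(-n - 1).toNat, by omega⟩
    subst hk
    obtain ⟨h1, h2⟩ := hnat (k + 1)
    push_cast at h1 h2
    rw [show (k:ℤ) + 1 - 1 = (k:ℤ) by ring] at h1 h2
    constructor
    · rw [show -((k:ℤ)+1) + 1 = -(k:ℤ) by ring,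
        show -((k:ℤ)+1) - 1 = -((k:ℤ)+1+1) by ring,
        qX_neg, qX_neg, qY_neg]
      linear_combination -h1
    · rw [show -((k:ℤ)+1) + 1 = -(k:ℤ) by ring,
        show -((k:ℤ)+1) - 1 = -((k:ℤ)+1+1) by ring,
        qY_neg, qY_neg, qX_neg]
      linear_combination -h2

/-- The color-swap map `x ↔ y`. -/
def swp : Fin 2 → Fin 2 := ![1, 0]

lemma rename_varX : MvPolynomial.rename swp varX = varY := by
  simp [varX, varY, swp]

lemma rename_varY : MvPolynomial.rename swp varY = varX := by
  simp [varX, varY, swp]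

lemma rename_qPair (n : ℕ) :
    MvPolynomial.rename swp (qPair n).1 = (qPair n).2 ∧
    MvPolynomial.rename swp (qPair n).2 = (qPair n).1 := by
  induction n using Nat.strong_induction_on with
  | _ n ih =>
    match n with
    | 0 => simp [qPair]
    | 1 => simp [qPair]
    | m + 2 =>
        obtain ⟨a1, a2⟩ := ih (m + 1) (by omega)
        obtain ⟨b1, b2⟩ := ih m (by omega)
        constructor
        · show MvPolynomial.rename swp (varX * (qPair (m+1)).2 - (qPair m).1) = _
          rw [map_sub, map_mul, rename_varX, a2, b1]; rfl
        · show MvPolynomial.rename swp (varY * (qPair (m+1)).1 - (qPair m).2) = _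
          rw [map_sub, map_mul, rename_varY, a1, b2]; rfl

lemma rename_qX (n : ℤ) : MvPolynomial.rename swp (qX n) = qY n := by
  rcases le_or_gt 0 n with h | h
  · obtain ⟨k, rfl⟩ : ∃ k : ℕ, n = (k : ℤ) := ⟨n.toNat, by omega⟩
    rw [qX_nat, qY_nat]; exact (rename_qPair k).1
  · obtain ⟨k, rfl⟩ : ∃ k : ℕ, n = -(k : ℤ) := ⟨(-n).toNat, by omega⟩
    rw [qX_neg, qY_neg, map_neg, qX_nat, qY_nat, (rename_qPair k).1]

lemma rename_qY (n : ℤ) : MvPolynomial.rename swp (qY n) = qX n := by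
  rcases le_or_gt 0 n with h | h
  · obtain ⟨k, rfl⟩ : ∃ k : ℕ, n = (k : ℤ) := ⟨n.toNat, by omega⟩
    rw [qX_nat, qY_nat]; exact (rename_qPair k).2
  · obtain ⟨k, rfl⟩ : ∃ k : ℕ, n = -(k : ℤ) := ⟨(-n).toNat, by omega⟩
    rw [qX_neg, qY_neg, map_neg, qX_nat, qY_nat, (rename_qPair k).2]

/-- Odd quantum numbers are color-symmetric; even ones satisfy `x·[2k]_y = y·[2k]_x`. -/
lemma even_odd_nat (k : ℕ) :
    varX * (qPair (2 * k)).2 = varY * (qPair (2 * k)).1 ∧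
    (qPair (2 * k + 1)).1 = (qPair (2 * k + 1)).2 := by
  induction k with
  | zero => simp [qPair]
  | succ m ih =>
      obtain ⟨ih1, ih2⟩ := ih
      have e1 : 2 * (m + 1) = 2 * m + 2 := by ring
      have h1 : varX * (qPair (2 * (m+1))).2 = varY * (qPair (2 * (m+1))).1 := by
        rw [e1]
        show varX * (varY * (qPair (2*m+1)).1 - (qPair (2*m)).2)
          = varY * (varX * (qPair (2*m+1)).2 - (qPair (2*m)).1)
        rw [ih2]
        linear_combination -varX * ih2 + (-1 : A2) * ih1 + varX * ih2
      refine ⟨h1, ?_⟩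
      rw [show 2 * (m+1) + 1 = (2*m+2) + 1 by ring]
      show varX * (qPair (2*m+2)).2 - (qPair (2*m+1)).1
        = varY * (qPair (2*m+2)).1 - (qPair (2*m+1)).2
      rw [ih2, show (2:ℕ)*m+2 = 2*(m+1) by ring]
      rw [h1]

lemma qX_odd_nonneg (n : ℤ) (h : Odd n) (hn : 0 ≤ n) : qX n = qY n := by
  obtain ⟨k, hk⟩ := h
  have hk0 : 0 ≤ k := by omega
  obtain ⟨m, rfl⟩ : ∃ m : ℕ, k = (m : ℤ) := ⟨k.toNat, by omega⟩
  have : n = ((2 * m + 1 : ℕ) : ℤ) := by push_cast; omega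
  rw [this, qX_nat, qY_nat]
  exact (even_odd_nat m).2

lemma qX_odd (n : ℤ) (h : Odd n) : qX n = qY n := by
  rcases le_or_gt 0 n with hn | hn
  · exact qX_odd_nonneg n h hn
  · have h' : Odd (-n) := by
      obtain ⟨k, hk⟩ := h; exact ⟨-k - 1, by omega⟩
    have := qX_odd_nonneg (-n) h' (by omega)
    rw [qX_neg, qY_neg] at this
    exact neg_injective this

lemma twX_even (d : ℤ) (h : Even d) : twX d = twY d := by
  have h1 : Odd (d + 1) := Even.add_one h
  have h2 : Odd (d - 1) := by
    obtain ⟨k, hk⟩ := h; exact ⟨k - 1, by omega⟩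
  rw [twX, twY, qX_odd _ h1, qX_odd _ h2]

lemma twX_neg (d : ℤ) : twX (-d) = twX d := by
  rw [twX, twX, show -d + 1 = -(d - 1) by ring, show -d - 1 = -(d + 1) by ring,
    qX_neg, qX_neg]
  ring

lemma twY_neg (d : ℤ) : twY (-d) = twY d := by
  rw [twY, twY, show -d + 1 = -(d - 1) by ring, show -d - 1 = -(d + 1) by ring,
    qY_neg, qY_neg]
  ring

lemma twX_rec (d : ℤ) : twX (d + 1) = varX * twY d - twX (d - 1) := by
  have h1 := (qX_rec (d + 1)).1
  have h2 := (qX_rec (d - 1)).1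
  rw [twX, twX, twY]
  rw [show d + 1 + 1 = (d + 1) + 1 by ring, h1,
    show d + 1 - 1 = (d - 1) + 1 by ring, h2]
  ring

lemma twY_rec (d : ℤ) : twY (d + 1) = varY * twX d - twY (d - 1) := by
  have h1 := (qX_rec (d + 1)).2
  have h2 := (qX_rec (d - 1)).2
  rw [twY, twY, twX]
  rw [show d + 1 + 1 = (d + 1) + 1 by ring, h1,
    show d + 1 - 1 = (d - 1) + 1 by ring, h2]
  ring

lemma qX_two : qX 2 = varX := by
  rw [show (2:ℤ) = ((2:ℕ):ℤ) by norm_num, qX_nat]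
  simp [qPair]
lemma qY_two : qY 2 = varY := by
  rw [show (2:ℤ) = ((2:ℕ):ℤ) by norm_num, qY_nat]
  simp [qPair]

lemma twX_zero : twX 0 = 2 := by
  rw [twX]
  norm_num
  rw [show (-1:ℤ) = -(1:ℤ) by ring, qX_neg, qX_one]
  ring
lemma twY_zero : twY 0 = 2 := by
  rw [twY]
  norm_num
  rw [show (-1:ℤ) = -(1:ℤ) by ring, qY_neg, qY_one]
  ring
lemma twX_one : twX 1 = varX := by
  rw [twX]
  norm_num [qX_zero, qX_two]
lemma twY_one : twY 1 = varY := by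
  rw [twY]
  norm_num [qY_zero, qY_two]

lemma addF_nat (k : ℕ) :
    (∀ m : ℤ, (qX (m + (k:ℤ)) + qX (m - (k:ℤ)) = twX (k:ℤ) * (if Even (k:ℤ) then qX m else qY m)) ∧
      (qY (m + (k:ℤ)) + qY (m - (k:ℤ)) = twY (k:ℤ) * (if Even (k:ℤ) then qY m else qX m))) ∧
    (∀ m : ℤ, (qX (m + ((k:ℤ)+1)) + qX (m - ((k:ℤ)+1)) = twX ((k:ℤ)+1) * (if Even ((k:ℤ)+1) then qX m else qY m)) ∧
      (qY (m + ((k:ℤ)+1)) + qY (m - ((k:ℤ)+1)) = twY ((k:ℤ)+1) * (if Even ((k:ℤ)+1) then qY m else qX m))) := by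
  induction k with
  | zero =>
      constructor
      · intro m
        norm_num [twX_zero, twY_zero]
        constructor <;> ring
      · intro m
        have hodd : ¬ Even (1:ℤ) := Int.not_even_iff_odd.mpr odd_one
        norm_num [hodd, twX_one, twY_one]
        constructor
        · linear_combination (qX_rec m).1
        · linear_combination (qX_rec m).2
  | succ j ih =>
      constructor
      · intro m
        push_cast
        exact ih.2 m
      · intro m
        push_cast
        obtain ⟨ih1, ih2⟩ := ih
        have r1x := (qX_rec (m + (j:ℤ) + 1)).1
        have r2x := (qX_rec (m - (j:ℤ) - 1)).1
        have r1y := (qX_rec (m + (j:ℤ) + 1)).2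
        have r2y := (qX_rec (m - (j:ℤ) - 1)).2
        have trx := twX_rec ((j:ℤ) + 1)
        have try' := twY_rec ((j:ℤ) + 1)
        rw [show m + (j:ℤ) + 1 + 1 = m + (j:ℤ) + 2 by ring,
          show m + (j:ℤ) + 1 - 1 = m + (j:ℤ) by ring] at r1x r1y
        rw [show m - (j:ℤ) - 1 + 1 = m - (j:ℤ) by ring,
          show m - (j:ℤ) - 1 - 1 = m - (j:ℤ) - 2 by ring] at r2x r2y
        rw [show (j:ℤ) + 1 + 1 = (j:ℤ) + 2 by ring,
          show (j:ℤ) + 1 - 1 = (j:ℤ) by ring] at trx try'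
        obtain ⟨i1x, i1y⟩ := ih2 m
        obtain ⟨i2x, i2y⟩ := ih1 m
        rw [show m + ((j:ℤ) + 1) = m + (j:ℤ) + 1 by ring,
          show m - ((j:ℤ) + 1) = m - (j:ℤ) - 1 by ring] at i1x i1y
        rw [show m + ((j:ℤ) + 1 + 1) = m + (j:ℤ) + 2 by ring,
          show m - ((j:ℤ) + 1 + 1) = m - (j:ℤ) - 2 by ring,
          show (j:ℤ) + 1 + 1 = (j:ℤ) + 2 by ring]
        rcases Int.even_or_odd (j:ℤ) with he | ho
        · have h1 : ¬ Even ((j:ℤ) + 1) := by rw [Int.even_iff] at he ⊢; omega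
          have h2 : Even ((j:ℤ) + 2) := by rw [Int.even_iff] at he ⊢; omega
          rw [if_neg h1] at i1x i1y
          rw [if_pos he] at i2x i2y
          rw [if_pos h2, if_pos h2]
          constructor
          · linear_combination r1x + r2x + varX * i1y - i2x - qX m * trx
          · linear_combination r1y + r2y + varY * i1x - i2y - qY m * try'
        · have he : ¬ Even ((j:ℤ)) := by rw [Int.odd_iff] at ho; rw [Int.even_iff]; omega
          have h1 : Even ((j:ℤ) + 1) := by rw [Int.odd_iff] at ho; rw [Int.even_iff]; omega
          have h2 : ¬ Even ((j:ℤ) + 2) := by rw [Int.odd_iff] at ho; rw [Int.even_iff]; omega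
          rw [if_pos h1] at i1x i1y
          rw [if_neg he] at i2x i2y
          rw [if_neg h2, if_neg h2]
          constructor
          · linear_combination r1x + r2x + varX * i1y - i2x - qY m * trx
          · linear_combination r1y + r2y + varY * i1x - i2y - qX m * try'

lemma addF (d m : ℤ) :
    (qX (m + d) + qX (m - d) = twX d * (if Even d then qX m else qY m)) ∧
    (qY (m + d) + qY (m - d) = twY d * (if Even d then qY m else qX m)) := by
  rcases le_or_gt 0 d with h | h
  · obtain ⟨k, rfl⟩ : ∃ k : ℕ, d = (k:ℤ) := ⟨d.toNat, by omega⟩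
    exact (addF_nat k).1 m
  · obtain ⟨k, rfl⟩ : ∃ k : ℕ, d = -(k:ℤ) := ⟨(-d).toNat, by omega⟩
    obtain ⟨h1, h2⟩ := (addF_nat k).1 m
    constructor
    · rw [show m + -(k:ℤ) = m - (k:ℤ) by ring, show m - -(k:ℤ) = m + (k:ℤ) by ring,
        twX_neg]
      simp only [even_neg]
      linear_combination h1
    · rw [show m + -(k:ℤ) = m - (k:ℤ) by ring, show m - -(k:ℤ) = m + (k:ℤ) by ring,
        twY_neg]
      simp only [even_neg]
      linear_combination h2

lemma ev_varX (d : ℤ) : MvPolynomial.aeval ![twX d, twY d] varX = twX d := by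
  simp [varX]
lemma ev_varY (d : ℤ) : MvPolynomial.aeval ![twX d, twY d] varY = twY d := by
  simp [varY]

lemma ev_swap (d : ℤ) (h : Even d) (v : ℤ) :
    MvPolynomial.aeval ![twX d, twY d] (qY v) = MvPolynomial.aeval ![twX d, twY d] (qX v) := by
  rw [← rename_qX v, MvPolynomial.aeval_rename]
  have hfun : (![twX d, twY d] ∘ swp) = ![twX d, twY d] := by
    funext i
    fin_cases i <;> simp [swp, Function.comp, twX_even d h]
  rw [hfun]

lemma mulF (d : ℤ) (v : ℤ) :
    MvPolynomial.aeval ![twX d, twY d] (qX v) * qX d = qX (v * d) ∧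
    MvPolynomial.aeval ![twX d, twY d] (qY v) * qY d = qY (v * d) := by
  have key : ∀ k : ℕ,
      (MvPolynomial.aeval ![twX d, twY d] (qX (k:ℤ)) * qX d = qX ((k:ℤ) * d) ∧
        MvPolynomial.aeval ![twX d, twY d] (qY (k:ℤ)) * qY d = qY ((k:ℤ) * d)) ∧
      (MvPolynomial.aeval ![twX d, twY d] (qX ((k:ℤ)+1)) * qX d = qX (((k:ℤ)+1) * d) ∧
        MvPolynomial.aeval ![twX d, twY d] (qY ((k:ℤ)+1)) * qY d = qY (((k:ℤ)+1) * d)) := by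
    intro k
    induction k with
    | zero =>
        norm_num [qX_zero, qY_zero, qX_one, qY_one]
    | succ j ih =>
        constructor
        · have := ih.2
          push_cast
          exact this
        · push_cast
          rw [show (j:ℤ) + 1 + 1 = (j:ℤ) + 2 by ring]
          obtain ⟨⟨ihx0, ihy0⟩, ⟨ihx1, ihy1⟩⟩ := ih
          have evr : MvPolynomial.aeval ![twX d, twY d] (qX ((j:ℤ)+2)) =
              twX d * MvPolynomial.aeval ![twX d, twY d] (qY ((j:ℤ)+1)) -
              MvPolynomial.aeval ![twX d, twY d] (qX (j:ℤ)) := by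
            have h := (qX_rec ((j:ℤ)+1)).1
            rw [show (j:ℤ)+1+1 = (j:ℤ)+2 by ring, show (j:ℤ)+1-1 = (j:ℤ) by ring] at h
            rw [h, map_sub, map_mul, ev_varX]
          have evry : MvPolynomial.aeval ![twX d, twY d] (qY ((j:ℤ)+2)) =
              twY d * MvPolynomial.aeval ![twX d, twY d] (qX ((j:ℤ)+1)) -
              MvPolynomial.aeval ![twX d, twY d] (qY (j:ℤ)) := by
            have h := (qX_rec ((j:ℤ)+1)).2
            rw [show (j:ℤ)+1+1 = (j:ℤ)+2 by ring, show (j:ℤ)+1-1 = (j:ℤ) by ring] at h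
            rw [h, map_sub, map_mul, ev_varY]
          obtain ⟨addx, addy⟩ := addF d (((j:ℤ)+1) * d)
          rw [show ((j:ℤ)+1)*d + d = ((j:ℤ)+2)*d by ring,
            show ((j:ℤ)+1)*d - d = (j:ℤ)*d by ring] at addx addy
          rcases Int.even_or_odd d with he | ho
          · rw [if_pos he] at addx addy
            have hsw := ev_swap d he ((j:ℤ)+1)
            constructor
            · linear_combination qX d * evr + qX d * twX d * hsw + twX d * ihx1 - ihx0 - addx
            · linear_combination qY d * evry - qY d * twY d * hsw + twY d * ihy1 - ihy0 - addy
          · have he : ¬ Even d := by rw [Int.odd_iff] at ho; rw [Int.even_iff]; omega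
            rw [if_neg he] at addx addy
            have hodd : qX d = qY d := qX_odd d ho
            constructor
            · linear_combination qX d * evr + twX d * ihy1 - ihx0 - addx +
                twX d * (MvPolynomial.aeval ![twX d, twY d] (qY ((j:ℤ)+1))) * hodd
            · linear_combination qY d * evry + twY d * ihx1 - ihy0 - addy -
                twY d * (MvPolynomial.aeval ![twX d, twY d] (qX ((j:ℤ)+1))) * hodd
  rcases le_or_gt 0 v with h | h
  · obtain ⟨k, rfl⟩ : ∃ k : ℕ, v = (k:ℤ) := ⟨v.toNat, by omega⟩
    exact (key k).1
  · obtain ⟨k, rfl⟩ : ∃ k : ℕ, v = -(k:ℤ) := ⟨(-v).toNat, by omega⟩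
    obtain ⟨hx, hy⟩ := (key k).1
    constructor
    · rw [qX_neg, map_neg, show -(k:ℤ)*d = -((k:ℤ)*d) by ring, qX_neg]
      linear_combination -hx
    · rw [qY_neg, map_neg, show -(k:ℤ)*d = -((k:ℤ)*d) by ring, qY_neg]
      linear_combination -hy


/-- Here `MvPolynomial.aeval ![twX d, twY d]` is the substitution
`x ↦ x(d)`, `y ↦ y(d)`, so the left factors are `[v]_{x(d)}` and `[v]_{y(d)}`. -/
theorem statement_7 (n v : ℤ) (hv : v ≠ 0) (hdvd : v ∣ n) :
    MvPolynomial.aeval ![twX (n / v), twY (n / v)] (qX v) * qX (n / v) = qX n ∧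
    MvPolynomial.aeval ![twX (n / v), twY (n / v)] (qY v) * qY (n / v) = qY n := by
  have hd : v * (n / v) = n := Int.mul_ediv_cancel' hdvd
  obtain ⟨h1, h2⟩ := mulF (n / v) v
  rw [hd] at h1 h2
  exact ⟨h1, h2⟩

end PaperStmt
end
end

section
/- Let (W,S) be a Coxeter system with a pre-realization h over an integral domain k, let W′ be a reflection subgroup of W with canonical generating set S′, and let (w_•, r_•) be a reflection datum for (W′,S′), with associated roots α_{s′} = w_{s′}·α_{r_{s′}} ∈ h* and coroots α_{s′}∨ = w_{s′}·α_{r_{s′}}∨ ∈ h. Then (h, {α_{s′}∨}_{s′∈S′}, {α_{s′}}_{s′∈S′}) is a pre-realization of (W′,S′): ⟨α_{s′}∨, α_{s′}⟩ = 2 for all s′ ∈ S′; for every s′ ∈ S′ and every v ∈ h the restricted W-action satisfies s′·v = v − ⟨v, α_{s′}⟩α_{s′}∨; and each α_{s′} : h → k is surjective. -/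
/-!
Statement 8: a reflection datum for a reflection subgroup `(W', S')` makes `h` into a
pre-realization of `(W', S')`.
-/

attribute [local instance] Classical.propDecidable

noncomputable section

namespace PaperStmt

variable {B W : Type*} [Group W] {M : CoxeterMatrix B}

/-- A pre-realization of the Coxeter system `cs` over `k`: a `k`-module `V` with simple
coroots in `V` and simple roots in the dual `V* = Module.Dual k V`, such that the pairing of
each simple root with its coroot is `2`, the formula `s(v) = v − ⟨v, α_s⟩ α_s∨` defines a
representation `rep` of `W` on `V`, and each simple root is surjective onto `k`
(Demazure surjectivity). -/
structure PreRealization (cs : CoxeterSystem M W) (k V : Type*)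
    [CommRing k] [AddCommGroup V] [Module k V] where
  coroot : B → V
  root : B → Module.Dual k V
  rep : W →* Module.End k V
  root_coroot_eq_two : ∀ i : B, root i (coroot i) = 2
  rep_simple : ∀ (i : B) (v : V), rep (cs.simple i) v = v - root i v • coroot i
  root_surjective : ∀ i : B, Function.Surjective ⇑(root i)

variable {k V : Type*} [CommRing k] [AddCommGroup V] [Module k V] {cs : CoxeterSystem M W}

/-- The contragredient action of `W` on the dual `V*`. -/
def dAct (R : PreRealization cs k V) (w : W) (f : Module.Dual k V) : Module.Dual k V :=
  f.comp (R.rep w⁻¹)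

/-- The canonical (Deodhar–Dyer) generating set of a subset `A ⊆ W`:
`{t ∈ ℛ(W) : N(t) ∩ A = {t}}` where `N(x) = {r ∈ ℛ(W) : ℓ(xr) < ℓ(x)}`. -/
def canonicalGens (cs : CoxeterSystem M W) (A : Set W) : Set W :=
  {t : W | cs.IsReflection t ∧
    ({r : W | cs.IsReflection r ∧ cs.length (t * r) < cs.length t} ∩ A) = {t}}

/-- `W'` is a reflection subgroup: it is generated by the reflections it contains. -/
def IsReflectionSubgroup (cs : CoxeterSystem M W) (W' : Subgroup W) : Prop :=
  W' = Subgroup.closure ((W' : Set W) ∩ {r : W | cs.IsReflection r})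

/-- A reflection datum on a subset `A ⊆ W`: maps `w_•, r_•` with `t = w_t r_t w_t⁻¹` and
`ℓ(w_t r_t) > ℓ(w_t)` for all `t ∈ A`. -/
def IsReflectionDatum (cs : CoxeterSystem M W) (A : Set W) (wm : W → W) (rm : W → B) : Prop :=
  ∀ t ∈ A, t = wm t * cs.simple (rm t) * (wm t)⁻¹ ∧
    cs.length (wm t) < cs.length (wm t * cs.simple (rm t))

/-- The root `α_t = w_t · α_{r_t}` attached to `t` by a reflection datum. -/
def datumRoot (R : PreRealization cs k V) (wm : W → W) (rm : W → B) (t : W) :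
    Module.Dual k V :=
  dAct R (wm t) (R.root (rm t))

/-- The coroot `α_t∨ = w_t · α_{r_t}∨` attached to `t` by a reflection datum. -/
def datumCoroot (R : PreRealization cs k V) (wm : W → W) (rm : W → B) (t : W) : V :=
  R.rep (wm t) (R.coroot (rm t))

/-- The Cartan pairing `a_{t,t'} = ⟨α_t∨, α_{t'}⟩` attached to a reflection datum. -/
def cartan (R : PreRealization cs k V) (wm : W → W) (rm : W → B) (t t' : W) : k :=
  datumRoot R wm rm t' (datumCoroot R wm rm t)

/-- The Cartan entry `a_{s,t} = ⟨α_s∨, α_t⟩` for simple reflections. -/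
def cartanS (R : PreRealization cs k V) (s t : B) : k := R.root t (R.coroot s)

theorem statement_8 [IsDomain k] [Module.Free k V] [Module.Finite k V]
    (cs : CoxeterSystem M W) (R : PreRealization cs k V)
    (W' : Subgroup W) (hW' : IsReflectionSubgroup cs W')
    (wm : W → W) (rm : W → B)
    (hdatum : IsReflectionDatum cs (canonicalGens cs (W' : Set W)) wm rm) :
    (∀ t ∈ canonicalGens cs (W' : Set W),
        datumRoot R wm rm t (datumCoroot R wm rm t) = 2) ∧
    (∀ t ∈ canonicalGens cs (W' : Set W), ∀ v : V,
        R.rep t v = v - datumRoot R wm rm t v • datumCoroot R wm rm t) ∧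
    (∀ t ∈ canonicalGens cs (W' : Set W),
        Function.Surjective ⇑(datumRoot R wm rm t)) := by
  have hinv : ∀ (w : W) (v : V), R.rep w⁻¹ (R.rep w v) = v := by
    intro w v
    rw [← Module.End.mul_apply, ← map_mul, inv_mul_cancel, map_one, Module.End.one_apply]
  refine ⟨?_, ?_, ?_⟩
  · intro t ht
    simp only [datumRoot, datumCoroot, dAct, LinearMap.comp_apply, hinv]
    exact R.root_coroot_eq_two (rm t)
  · intro t ht v
    obtain ⟨heq, -⟩ := hdatum t ht
    conv_lhs => rw [heq]
    simp only [map_mul, Module.End.mul_apply, R.rep_simple, map_sub, map_smul,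
      datumRoot, datumCoroot, dAct, LinearMap.comp_apply]
    rw [← Module.End.mul_apply (R.rep (wm t)) (R.rep (wm t)⁻¹), ← map_mul,
      mul_inv_cancel, map_one, Module.End.one_apply]
  · intro t ht c
    obtain ⟨x, hx⟩ := R.root_surjective (rm t) c
    exact ⟨R.rep (wm t) x, by
      simp only [datumRoot, dAct, LinearMap.comp_apply, hinv, hx]⟩

end PaperStmt
end
end
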